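/- For φ ∈ (1/2, 1), the three-state necklace current exhibits a sign reversal as a function of the driving ε: there exist 0 < ε₁ < ε₂ with J(ε₁, φ) < 0 < J(ε₂, φ); consequently (by continuity of ε ↦ J(ε, φ)) there exists ε* ∈ (ε₁, ε₂) with J(ε*, φ) = 0. -/
import Mathlib


/-- The normalization `D(ε) = (1 + e^{ε/4}) + (e^{ε/2} + e^{−ε/4})` of the stationary
occupations of the three-state necklace. -/
noncomputable def neckD (ε : ℝ) : ℝ :=
  (1 + Real.exp (ε / 4)) + (Real.exp (ε / 2) + Real.exp (-ε / 4))

/-- Stationary occupation `ρ(0) = (1 + e^{ε/4})/D(ε)`. -/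
noncomputable def neckRho0 (ε : ℝ) : ℝ := (1 + Real.exp (ε / 4)) / neckD ε

/-- Stationary occupation `ρ(u) = (e^{ε/2} + e^{−ε/4})/D(ε)`. -/
noncomputable def neckRhoU (ε : ℝ) : ℝ := (Real.exp (ε / 2) + Real.exp (-ε / 4)) / neckD ε

/-- The translational current of the three-state necklace towards the right:
`J(ε,φ) = ρ(0)[e^{ε/2} + φ e^{−ε/2}] − [ρ(u) + ρ(0) φ e^{ε/2}]`. -/
noncomputable def neckJ (ε φ : ℝ) : ℝ :=
  neckRho0 ε * (Real.exp (ε / 2) + φ * Real.exp (-ε / 2))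
    - (neckRhoU ε + neckRho0 ε * φ * Real.exp (ε / 2))

lemma neckD_pos (ε : ℝ) : 0 < neckD ε := by
  unfold neckD
  positivity

lemma neckJ_factor (ε φ : ℝ) :
    neckJ ε φ = (Real.exp ε - 1) * ((1 - φ) * Real.exp (ε / 4) - φ) /
      (neckD ε * Real.exp (ε / 2)) := by
  have hD := neckD_pos ε
  have hx : (0:ℝ) < Real.exp (ε / 4) := Real.exp_pos _
  have h2 : Real.exp (ε / 2) = Real.exp (ε / 4) ^ 2 := by
    rw [← Real.exp_nat_mul]; ring_nf
  have h4 : Real.exp ε = Real.exp (ε / 4) ^ 4 := by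
    rw [← Real.exp_nat_mul]; ring_nf
  have hm4 : Real.exp (-ε / 4) = (Real.exp (ε / 4))⁻¹ := by
    rw [← Real.exp_neg]; ring_nf
  have hm2 : Real.exp (-ε / 2) = (Real.exp (ε / 4) ^ 2)⁻¹ := by
    rw [← h2, ← Real.exp_neg]; ring_nf
  unfold neckJ neckRho0 neckRhoU
  have hD' : neckD ε = (1 + Real.exp (ε / 4)) +
      (Real.exp (ε / 4) ^ 2 + (Real.exp (ε / 4))⁻¹) := by
    unfold neckD; rw [h2, hm4]
  rw [h2, h4, hm4, hm2, hD']
  set x := Real.exp (ε / 4)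
  have hx' : x ≠ 0 := ne_of_gt hx
  have hD0 : (1 + x) + (x ^ 2 + x⁻¹) ≠ 0 := by rw [← hD']; exact ne_of_gt hD
  field_simp
  ring

/-- For `φ ∈ (1/2, 1)` the necklace current shows a sign reversal in the driving `ε`:
there are `0 < ε₁ < ε₂` with `J(ε₁,φ) < 0 < J(ε₂,φ)`, and hence (by continuity) a
stalling point `ε* ∈ (ε₁, ε₂)` with `J(ε*,φ) = 0`. -/
theorem necklace_current_sign_reversal (φ : ℝ) (hφ₁ : 1 / 2 < φ) (hφ₂ : φ < 1) :
    ∃ ε₁ ε₂ : ℝ, 0 < ε₁ ∧ ε₁ < ε₂ ∧ neckJ ε₁ φ < 0 ∧ 0 < neckJ ε₂ φ ∧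
      ∃ εs ∈ Set.Ioo ε₁ ε₂, neckJ εs φ = 0 := by
  have h1φ : 0 < 1 - φ := by linarith
  have hr1 : 1 < φ / (1 - φ) := by
    rw [lt_div_iff₀ h1φ]; linarith
  have hr0 : 0 < φ / (1 - φ) := lt_trans one_pos hr1
  set L := Real.log (φ / (1 - φ)) with hL
  have hLpos : 0 < L := Real.log_pos hr1
  have heL : Real.exp L = φ / (1 - φ) := Real.exp_log hr0
  have key : (1 - φ) * Real.exp L = φ := by
    rw [heL]; field_simp
  refine ⟨2 * L, 8 * L, by linarith, by linarith, ?_, ?_, ⟨4 * L, ⟨by linarith, by linarith⟩, ?_⟩⟩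
  · -- J(2L) < 0
    rw [neckJ_factor]
    apply div_neg_of_neg_of_pos
    · apply mul_neg_of_pos_of_neg
      · have : (1:ℝ) < Real.exp (2 * L) := by
          rw [← Real.exp_zero]; exact Real.exp_lt_exp.mpr (by linarith)
        linarith
      · have : Real.exp (2 * L / 4) < Real.exp L := Real.exp_lt_exp.mpr (by linarith)
        nlinarith [Real.exp_pos (2 * L / 4)]
    · exact mul_pos (neckD_pos _) (Real.exp_pos _)
  · -- J(8L) > 0
    rw [neckJ_factor]
    apply div_pos
    · apply mul_pos
      · have : (1:ℝ) < Real.exp (8 * L) := by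
          rw [← Real.exp_zero]; exact Real.exp_lt_exp.mpr (by linarith)
        linarith
      · have : Real.exp L < Real.exp (8 * L / 4) := Real.exp_lt_exp.mpr (by linarith)
        nlinarith [Real.exp_pos (8 * L / 4)]
    · exact mul_pos (neckD_pos _) (Real.exp_pos _)
  · -- J(4L) = 0
    rw [neckJ_factor]
    have : Real.exp (4 * L / 4) = Real.exp L := by ring_nf
    rw [this, key]
    simp
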